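/- Let W be a real separable Banach space, μ a Borel probability measure on W, and q a symmetric bilinear form on W* with q(u,u) > 0 for all u ≠ 0, such that ∫_W e^{iu(x)} dμ(x) = e^{−q(u,u)/2} for all u ∈ W*. Define the Cameron–Martin norm ‖w‖_H := sup{|u(w)|/√(q(u,u)) : u ∈ W*, u ≠ 0} and the Cameron–Martin space H := {w ∈ W : ‖w‖_H < ∞}. Then H is a dense subspace of W. -/

import Mathlib

/-!
The characteristic functional says that every marginal `μ.map L` is the centred real Gaussian of
variance `q L L`; hence `μ` is Gaussian, has a finite second moment by Fernique's theorem, and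
`q L L = Var[L; μ]`. For `L ∈ W*` the covariance vector `R L = ∫ L(x - m) • (x - m) dμ`, with `m`
the mean, satisfies `|u (R L)| = |Cov(L, u)| ≤ √(q L L) √(q u u)` by Cauchy–Schwarz, so `R L` lies
in the Cameron–Martin space. A functional `f` vanishing on that space then gives
`0 = f (R f) = q f f`, i.e. `f = 0`, and Hahn–Banach turns this into density.
-/

open MeasureTheory
open scoped ENNReal

/-- The Cameron–Martin norm (valued in `[0,∞]`) associated to a positive
definite form `q` on the dual of `W`:
`‖w‖_H = sup { |u(w)|/√(q(u,u)) : u ∈ W*, u ≠ 0 }`. -/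
noncomputable def cameronMartinNorm {W : Type*} [NormedAddCommGroup W]
    [NormedSpace ℝ W] (q : (W →L[ℝ] ℝ) →ₗ[ℝ] (W →L[ℝ] ℝ) →ₗ[ℝ] ℝ)
    (w : W) : ℝ≥0∞ :=
  ⨆ u : {u : W →L[ℝ] ℝ // u ≠ 0},
    ENNReal.ofReal (|u.1 w| / Real.sqrt (q u.1 u.1))

open ProbabilityTheory Complex

theorem Submodule.dense_of_forall_dual_eq_zero {E : Type*} [TopologicalSpace E] [AddCommGroup E]
    [IsTopologicalAddGroup E] [Module ℝ E] [ContinuousSMul ℝ E] [LocallyConvexSpace ℝ E]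
    (p : Submodule ℝ E) (h : ∀ f : StrongDual ℝ E, (∀ x ∈ p, f x = 0) → f = 0) :
    Dense (p : Set E) := by
  rw [dense_iff_closure_eq, ← p.topologicalClosure_coe]
  by_contra hp
  obtain ⟨x, hx⟩ := (Set.ne_univ_iff_exists_notMem _).1 hp
  obtain ⟨f, u, hfx, hfu⟩ :=
    geometric_hahn_banach_point_closed p.topologicalClosure.convex p.isClosed_topologicalClosure hx
  -- `f` is bounded below on a subspace, hence vanishes there
  have hf_closure : ∀ y ∈ p.topologicalClosure, f y = 0 := fun y hy => by
    by_contra hy0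
    have := hfu (((u - 1) / f y) • y) (p.topologicalClosure.smul_mem _ hy)
    rw [map_smul, smul_eq_mul, div_mul_cancel₀ _ hy0] at this
    linarith
  have hf0 := h f fun y hy => hf_closure y (p.le_topologicalClosure hy)
  simpa [hf0] using hfx.trans (hfu 0 (zero_mem _))

section CameronMartin

variable {W : Type*} [NormedAddCommGroup W] [NormedSpace ℝ W]
  (q : (W →L[ℝ] ℝ) →ₗ[ℝ] (W →L[ℝ] ℝ) →ₗ[ℝ] ℝ)

lemma cameronMartinNorm_le_ofReal {w : W} {C : ℝ} (hC : 0 ≤ C)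
    (h : ∀ u : W →L[ℝ] ℝ, |u w| ≤ C * √(q u u)) :
    cameronMartinNorm q w ≤ ENNReal.ofReal C :=
  iSup_le fun u => ENNReal.ofReal_le_ofReal <| div_le_of_le_mul₀ (Real.sqrt_nonneg _) hC (h u)

lemma ofReal_le_cameronMartinNorm (w : W) {u : W →L[ℝ] ℝ} (hu : u ≠ 0) :
    ENNReal.ofReal (|u w| / √(q u u)) ≤ cameronMartinNorm q w :=
  le_iSup (fun u : {u : W →L[ℝ] ℝ // u ≠ 0} => ENNReal.ofReal (|u.1 w| / √(q u.1 u.1))) ⟨u, hu⟩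

lemma cameronMartinNorm_add_le (v w : W) :
    cameronMartinNorm q (v + w) ≤ cameronMartinNorm q v + cameronMartinNorm q w := by
  refine iSup_le fun u => ?_
  calc ENNReal.ofReal (|u.1 (v + w)| / √(q u.1 u.1))
      ≤ ENNReal.ofReal (|u.1 v| / √(q u.1 u.1) + |u.1 w| / √(q u.1 u.1)) := by
        rw [← add_div, map_add]
        gcongr
        exact abs_add_le _ _
    _ ≤ ENNReal.ofReal (|u.1 v| / √(q u.1 u.1)) + ENNReal.ofReal (|u.1 w| / √(q u.1 u.1)) :=
        ENNReal.ofReal_add_le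
    _ ≤ cameronMartinNorm q v + cameronMartinNorm q w :=
        add_le_add (ofReal_le_cameronMartinNorm q v u.2) (ofReal_le_cameronMartinNorm q w u.2)

lemma cameronMartinNorm_smul_le (c : ℝ) (w : W) :
    cameronMartinNorm q (c • w) ≤ ENNReal.ofReal |c| * cameronMartinNorm q w := by
  refine iSup_le fun u => ?_
  rw [map_smul, smul_eq_mul, abs_mul, mul_div_assoc, ENNReal.ofReal_mul (abs_nonneg c)]
  exact mul_le_mul_right (ofReal_le_cameronMartinNorm q w u.2) _

noncomputable def cameronMartinSpace : Submodule ℝ W where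
  carrier := {w | cameronMartinNorm q w < ⊤}
  zero_mem' :=
    (cameronMartinNorm_le_ofReal q le_rfl fun _ => by simp).trans_lt ENNReal.ofReal_lt_top
  add_mem' hv hw := (cameronMartinNorm_add_le q _ _).trans_lt (ENNReal.add_lt_top.2 ⟨hv, hw⟩)
  smul_mem' c _ hw :=
    (cameronMartinNorm_smul_le q c _).trans_lt (ENNReal.mul_lt_top ENNReal.ofReal_lt_top hw)

end CameronMartin

section Gaussian

variable {E : Type*} [NormedAddCommGroup E] [NormedSpace ℝ E] [MeasurableSpace E] [BorelSpace E]
  {μ : Measure E}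

lemma map_eq_gaussianReal_of_charFunDual_eq [IsFiniteMeasure μ]
    (q : StrongDual ℝ E →ₗ[ℝ] StrongDual ℝ E →ₗ[ℝ] ℝ) (hq : ∀ L, 0 ≤ q L L)
    (h : ∀ L, charFunDual μ L = exp (-(q L L : ℂ) / 2)) (L : StrongDual ℝ E) :
    μ.map L = gaussianReal 0 (q L L).toNNReal := by
  apply Measure.ext_of_charFun
  ext t
  rw [charFun_map_eq_charFunDual_smul, h, charFun_gaussianReal, Real.coe_toNNReal _ (hq L)]
  simp only [map_smul, LinearMap.smul_apply, smul_eq_mul, ofReal_mul, ofReal_zero, mul_zero,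
    zero_mul, zero_sub]
  ring_nf

lemma isGaussian_of_charFunDual_eq [IsFiniteMeasure μ]
    (q : StrongDual ℝ E →ₗ[ℝ] StrongDual ℝ E →ₗ[ℝ] ℝ) (hq : ∀ L, 0 ≤ q L L)
    (h : ∀ L, charFunDual μ L = exp (-(q L L : ℂ) / 2)) :
    IsGaussian μ :=
  isGaussian_of_map_eq_gaussianReal fun L => ⟨0, _, map_eq_gaussianReal_of_charFunDual_eq q hq h L⟩

lemma variance_eq_of_charFunDual_eq [IsFiniteMeasure μ]
    (q : StrongDual ℝ E →ₗ[ℝ] StrongDual ℝ E →ₗ[ℝ] ℝ) (hq : ∀ L, 0 ≤ q L L)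
    (h : ∀ L, charFunDual μ L = exp (-(q L L : ℂ) / 2)) (L : StrongDual ℝ E) :
    Var[L; μ] = q L L := by
  rw [← variance_id_map (by fun_prop), map_eq_gaussianReal_of_charFunDual_eq q hq h,
    variance_id_gaussianReal, Real.coe_toNNReal _ (hq L)]

lemma abs_covarianceBilinDual_le (μ : Measure E) (L₁ L₂ : StrongDual ℝ E) :
    |covarianceBilinDual μ L₁ L₂|
      ≤ √(covarianceBilinDual μ L₁ L₁) * √(covarianceBilinDual μ L₂ L₂) := by
  rw [← Real.sqrt_mul (covarianceBilinDual_self_nonneg _)]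
  exact Real.abs_le_sqrt <| (covarianceBilinDual μ).toBilinForm.apply_sq_le_of_symm
    covarianceBilinDual_self_nonneg
    (LinearMap.BilinForm.isSymm_iff.1 isPosSemidef_covarianceBilinDual.isSymm) L₁ L₂

variable [CompleteSpace E]

noncomputable def covarianceVector (μ : Measure E) (L : StrongDual ℝ E) : E :=
  ∫ x, L (x - μ[id]) • (x - μ[id]) ∂μ

lemma apply_covarianceVector [IsFiniteMeasure μ] (h : MemLp id 2 μ) (L₁ L₂ : StrongDual ℝ E) :
    L₂ (covarianceVector μ L₁) = covarianceBilinDual μ L₁ L₂ := by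
  have hcentered : MemLp (fun x => x - μ[id]) 2 μ := h.sub (memLp_const _)
  have hint : Integrable (fun x => L₁ (x - μ[id]) • (x - μ[id])) μ :=
    memLp_one_iff_integrable.1 (hcentered.smul (hcentered.continuousLinearMap_comp L₁))
  rw [covarianceVector, ← L₂.integral_comp_comm hint, covarianceBilinDual_apply' h]
  simp

lemma covarianceVector_mem_cameronMartinSpace [IsFiniteMeasure μ] (h : MemLp id 2 μ)
    {q : StrongDual ℝ E →ₗ[ℝ] StrongDual ℝ E →ₗ[ℝ] ℝ}
    (hq : ∀ L, covarianceBilinDual μ L L = q L L) (L : StrongDual ℝ E) :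
    covarianceVector μ L ∈ cameronMartinSpace q := by
  refine (cameronMartinNorm_le_ofReal q (Real.sqrt_nonneg (q L L)) fun u => ?_).trans_lt
    ENNReal.ofReal_lt_top
  rw [apply_covarianceVector h, ← hq, ← hq]
  exact abs_covarianceBilinDual_le μ L u

end Gaussian

theorem cameronMartin_dense_general
    {W : Type*} [NormedAddCommGroup W] [NormedSpace ℝ W] [CompleteSpace W]
    [TopologicalSpace.SeparableSpace W] [MeasurableSpace W] [BorelSpace W]
    (μ : Measure W) [IsProbabilityMeasure μ]
    (q : (W →L[ℝ] ℝ) →ₗ[ℝ] (W →L[ℝ] ℝ) →ₗ[ℝ] ℝ)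
    (hpos : ∀ u : W →L[ℝ] ℝ, u ≠ 0 → 0 < q u u)
    (hchar : ∀ u : W →L[ℝ] ℝ,
      ∫ x, Complex.exp (Complex.I * (u x : ℂ)) ∂μ
        = Complex.exp (-(q u u : ℂ) / 2)) :
    Dense {w : W | cameronMartinNorm q w < ⊤} := by
  have hq : ∀ u, 0 ≤ q u u := fun u => by
    rcases eq_or_ne u 0 with rfl | hu
    · simp
    · exact (hpos u hu).le
  have hchar' : ∀ u, charFunDual μ u = exp (-(q u u : ℂ) / 2) := fun u => by
    simp_rw [charFunDual_apply, ← hchar, mul_comm]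
  have := isGaussian_of_charFunDual_eq q hq hchar'
  have hcov : ∀ u, covarianceBilinDual μ u u = q u u := fun u => by
    rw [covarianceBilinDual_self_eq_variance IsGaussian.memLp_two_id,
      variance_eq_of_charFunDual_eq q hq hchar']
  refine (cameronMartinSpace q).dense_of_forall_dual_eq_zero fun f hf => ?_
  by_contra hf0
  have hvanish := hf _ (covarianceVector_mem_cameronMartinSpace IsGaussian.memLp_two_id hcov f)
  rw [apply_covarianceVector IsGaussian.memLp_two_id, hcov] at hvanish
  exact (hpos f hf0).ne' hvanish

/-- **The Cameron–Martin space of a non-degenerate Gaussian measure is dense.**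
Let `μ` be a Borel probability measure on a real separable Banach space `W`
whose characteristic functional is `∫ e^{iu(x)} dμ(x) = e^{-q(u,u)/2}` for a
symmetric bilinear form `q` on `W*` with `q(u,u) > 0` for `u ≠ 0`.  Then the
Cameron–Martin space `H = {w ∈ W : ‖w‖_H < ∞}` is dense in `W`. -/
theorem cameronMartin_dense
    {W : Type*} [NormedAddCommGroup W] [NormedSpace ℝ W] [CompleteSpace W]
    [TopologicalSpace.SeparableSpace W] [MeasurableSpace W] [BorelSpace W]
    (μ : Measure W) [IsProbabilityMeasure μ]
    (q : (W →L[ℝ] ℝ) →ₗ[ℝ] (W →L[ℝ] ℝ) →ₗ[ℝ] ℝ)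
    (hsym : ∀ u v : W →L[ℝ] ℝ, q u v = q v u)
    (hpos : ∀ u : W →L[ℝ] ℝ, u ≠ 0 → 0 < q u u)
    (hchar : ∀ u : W →L[ℝ] ℝ,
      ∫ x, Complex.exp (Complex.I * (u x : ℂ)) ∂μ
        = Complex.exp (-(q u u : ℂ) / 2)) :
    Dense {w : W | cameronMartinNorm q w < ⊤} :=
  cameronMartin_dense_general μ q hpos hchar
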